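/- Let w(x) = w₀(|x|) be essentially constant over dyadic annuli with constant β and μ the measure with density w on ℝⁿ (n large enough that μ(B_R) ≤ 2β w₀(R)|B_R|). Then pointwise M_μ f(x) ≤ C ( M f(x) + (1/w(x)) M(fw)(x) + H_μ f(x) ), where M is the Lebesgue Hardy–Littlewood maximal operator, M_μ the centered maximal operator with respect to μ, and H_μ f(x) = sup_{R ≥ |x|} (1/μ(B_R)) ∫_{B_R} |f| dμ; C depends only on β. -/

import Mathlib

open MeasureTheory Metric
open scoped ENNReal

/-- The centered maximal function of `g` at `x` with respect to a measure `ν` on `ℝⁿ`. -/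
noncomputable def centeredMax (n : ℕ) (ν : Measure (EuclideanSpace ℝ (Fin n)))
    (g : EuclideanSpace ℝ (Fin n) → ℝ) (x : EuclideanSpace ℝ (Fin n)) : ℝ≥0∞ :=
  ⨆ (r : ℝ) (_ : 0 < r), (ν (ball x r))⁻¹ * ∫⁻ y in ball x r, ‖g y‖₊ ∂ν

/-- The Hardy-type operator `H_ν g (x) = sup_{R ≥ |x|} (1/ν(B_R)) ∫_{B_R} |g| dν`. -/
noncomputable def hardyOp (n : ℕ) (ν : Measure (EuclideanSpace ℝ (Fin n)))
    (g : EuclideanSpace ℝ (Fin n) → ℝ) (x : EuclideanSpace ℝ (Fin n)) : ℝ≥0∞ :=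
  ⨆ (R : ℝ) (_ : ‖x‖ ≤ R),
    (ν (ball (0 : EuclideanSpace ℝ (Fin n)) R))⁻¹ *
      ∫⁻ y in ball (0 : EuclideanSpace ℝ (Fin n)) R, ‖g y‖₊ ∂ν

open Set Module

/-!
Fix a ball `B = B(x, r)`. If `r ≤ |x|`, the half of `B` where `|y| ≥ |x|` (half, by reflecting
through `x`) lies in `|x| ≤ |y| ≤ 2|x|`, where `w ≥ w(x)/β`; hence `μ(B) ≥ w(x)|B|/(2β)`, and
`∫_B |f| dμ = ∫_B |fw|` gives the term `w(x)⁻¹ M(fw)(x)` with constant `2β`.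

If `|x| < r`, split `B` along `B_{r/2}`. On `B \ B_{r/2}` we have `r/2 ≤ |y| ≤ 2r`, so
`w ≈ w₀(r)` there, and `B \ B_{r/2}` is at least as large as the annulus `A = B_r \ B_{r/2}`,
which in dimension `n ≥ 1` carries at least half of `|B|`. So `μ(B) ≥ w₀(r)|A|/β`, the part of
the integral over `B \ B_{r/2}` is at most `2β² μ(B) M f(x)`, and the part over `B ∩ B_{r/2}` is
at most `μ(B_r) H_μ f(x)`, where `μ(B_r) ≤ (2β³ + β²) μ(B)` by the hypothesis applied to
`μ(B_{r/2})`. All constants are at most `2β⁴ + 1`.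
-/

theorem inv_mul_le_of_le_of_le_mul {a b I K T : ℝ≥0∞} (hb₀ : b ≠ 0) (hb : b ≠ ∞) (hba : b ≤ a)
    (hI : I ≤ K * (b * T)) : a⁻¹ * I ≤ K * T :=
  calc a⁻¹ * I ≤ b⁻¹ * (b * (K * T)) :=
        mul_le_mul' (ENNReal.inv_le_inv.2 hba) (hI.trans_eq (by ring))
    _ = K * T := ENNReal.inv_mul_cancel_left hb₀ hb

theorem setLIntegral_le_measure_mul_of_inv_mul_le {α : Type*} [MeasurableSpace α]
    {ν : Measure α} {s : Set α} {g : α → ℝ≥0∞} {T : ℝ≥0∞} (hs : ν s ≠ ∞)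
    (h : (ν s)⁻¹ * ∫⁻ y in s, g y ∂ν ≤ T) : ∫⁻ y in s, g y ∂ν ≤ ν s * T := by
  by_cases hs₀ : ν s = 0
  · simp [Measure.restrict_eq_zero.2 hs₀]
  · calc ∫⁻ y in s, g y ∂ν = ν s * ((ν s)⁻¹ * ∫⁻ y in s, g y ∂ν) :=
          (ENNReal.mul_inv_cancel_left hs₀ hs).symm
      _ ≤ ν s * T := by gcongr

section WithDensity

variable {α : Type*} [MeasurableSpace α] {μ : Measure α} {W : α → ℝ≥0∞} {s : Set α}

theorem setLIntegral_withDensity_le (hW : Measurable W) (hs : MeasurableSet s) (g : α → ℝ≥0∞) :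
    ∫⁻ y in s, g y ∂μ.withDensity W ≤ ∫⁻ y in s, W y * g y ∂μ := by
  rw [restrict_withDensity hs]
  exact lintegral_withDensity_le_lintegral_mul _ hW g

theorem setLIntegral_withDensity_le_mul (hW : Measurable W) (hs : MeasurableSet s) {c : ℝ≥0∞}
    (hc : ∀ y ∈ s, W y ≤ c) (hc_top : c ≠ ∞) (g : α → ℝ≥0∞) :
    ∫⁻ y in s, g y ∂μ.withDensity W ≤ c * ∫⁻ y in s, g y ∂μ :=
  calc ∫⁻ y in s, g y ∂μ.withDensity W ≤ ∫⁻ y in s, W y * g y ∂μ :=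
        setLIntegral_withDensity_le hW hs g
    _ ≤ ∫⁻ y in s, c * g y ∂μ := setLIntegral_mono' hs fun y hy => by gcongr; exact hc y hy
    _ = c * ∫⁻ y in s, g y ∂μ := lintegral_const_mul' _ _ hc_top

theorem withDensity_apply_le_mul (hs : MeasurableSet s) {c : ℝ≥0∞} (hc : ∀ y ∈ s, W y ≤ c) :
    μ.withDensity W s ≤ c * μ s := by
  rw [withDensity_apply W hs, ← setLIntegral_const]
  exact setLIntegral_mono' hs hc

theorem mul_le_withDensity_apply (hs : MeasurableSet s) {c : ℝ≥0∞} (hc : ∀ y ∈ s, c ≤ W y) :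
    c * μ s ≤ μ.withDensity W s := by
  rw [withDensity_apply W hs, ← setLIntegral_const]
  exact setLIntegral_mono' hs hc

end WithDensity

section Geometry

variable {E : Type*} [NormedAddCommGroup E]

theorem norm_mem_Icc_of_mem_ball_sdiff_ball_half {z y : E} {r : ℝ} (hz : ‖z‖ ≤ r)
    (hy : y ∈ ball z r \ ball 0 (r / 2)) : ‖y‖ ∈ Icc (r / 2) (2 * r) := by
  have hyz : ‖y - z‖ < r := by simpa [dist_eq_norm] using hy.1
  refine ⟨not_lt.1 fun h => hy.2 (mem_ball_zero_iff.2 h), ?_⟩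
  linarith [norm_le_insert' y z]

variable [MeasurableSpace E] [BorelSpace E]

theorem measure_ball_half_add_measure_ball_sdiff (μ : Measure E) {r : ℝ} (hr : 0 ≤ r) :
    μ (ball 0 (r / 2)) + μ (ball 0 r \ ball 0 (r / 2)) = μ (ball (0 : E) r) := by
  rw [measure_add_sdiff measurableSet_ball.nullMeasurableSet,
    union_eq_right.2 (ball_subset_ball (by linarith))]

variable [NormedSpace ℝ E]

theorem measure_ball_le_two_mul_measure_ball_inter_norm_ge (μ : Measure E)
    [μ.IsAddLeftInvariant] [μ.IsNegInvariant] (x : E) (r : ℝ) :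
    μ (ball x r) ≤ 2 * μ (ball x r ∩ {y | ‖x‖ ≤ ‖y‖}) := by
  set A := ball x r ∩ {y | ‖x‖ ≤ ‖y‖}
  have hA : MeasurableSet A :=
    measurableSet_ball.inter (measurableSet_le measurable_const measurable_norm)
  have hσ : MeasurePreserving (fun y => (x + x) - y) μ μ :=
    Measure.measurePreserving_sub_left μ (x + x)
  -- the reflection `y ↦ 2x - y` preserves `ball x r`, and `‖y‖ + ‖2x - y‖ ≥ 2‖x‖`
  have hcover : ball x r ⊆ A ∪ (fun y => (x + x) - y) ⁻¹' A := by
    intro y hy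
    by_cases hxy : ‖x‖ ≤ ‖y‖
    · exact Or.inl ⟨hy, hxy⟩
    refine Or.inr ⟨?_, ?_⟩
    · rw [mem_ball, dist_eq_norm] at hy ⊢
      rwa [show x + x - y - x = -(y - x) by abel, norm_neg]
    · have h : ‖x + x‖ ≤ ‖y‖ + ‖x + x - y‖ := by simpa using norm_add_le y (x + x - y)
      rw [← two_smul ℝ x, norm_smul, Real.norm_two, two_smul] at h
      change ‖x‖ ≤ ‖x + x - y‖
      linarith
  calc μ (ball x r) ≤ μ A + μ ((fun y => (x + x) - y) ⁻¹' A) :=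
        (measure_mono hcover).trans (measure_union_le _ _)
    _ = 2 * μ A := by rw [hσ.measure_preimage hA.nullMeasurableSet, two_mul]

variable [FiniteDimensional ℝ E] (μ : Measure E) [μ.IsAddHaarMeasure]

theorem two_mul_addHaar_ball_half_le [Nontrivial E] (x : E) {r : ℝ} (hr : 0 ≤ r) :
    2 * μ (ball x (r / 2)) ≤ μ (ball x r) := by
  rw [Measure.addHaar_ball μ x hr, Measure.addHaar_ball μ x (by positivity), ← mul_assoc,
    ← ENNReal.ofReal_ofNat 2, ← ENNReal.ofReal_mul zero_le_two, div_pow]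
  gcongr
  calc 2 * (r ^ finrank ℝ E / 2 ^ finrank ℝ E)
      ≤ 2 ^ finrank ℝ E * (r ^ finrank ℝ E / 2 ^ finrank ℝ E) := by
        gcongr; exact le_self_pow₀ one_le_two finrank_pos.ne'
    _ = r ^ finrank ℝ E := mul_div_cancel₀ _ (by positivity)

theorem addHaar_ball_sdiff_ball_half_le (x : E) {r : ℝ} (hr : 0 ≤ r) :
    μ (ball 0 r \ ball 0 (r / 2)) ≤ μ (ball x r \ ball 0 (r / 2)) := by
  rw [measure_sdiff (ball_subset_ball (by linarith)) measurableSet_ball.nullMeasurableSet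
    measure_ball_lt_top.ne, ← Measure.addHaar_ball_center μ x]
  exact le_measure_sdiff

theorem addHaar_ball_half_le_addHaar_ball_sdiff [Nontrivial E] {r : ℝ} (hr : 0 ≤ r) :
    μ (ball 0 (r / 2)) ≤ μ (ball (0 : E) r \ ball 0 (r / 2)) := by
  have h := two_mul_addHaar_ball_half_le μ (0 : E) hr
  rw [← measure_ball_half_add_measure_ball_sdiff μ hr, two_mul] at h
  exact ENNReal.le_of_add_le_add_left measure_ball_lt_top.ne h

theorem addHaar_ball_le_two_mul_addHaar_ball_sdiff [Nontrivial E] (x : E) {r : ℝ} (hr : 0 ≤ r) :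
    μ (ball x r) ≤ 2 * μ (ball 0 r \ ball 0 (r / 2)) := by
  rw [Measure.addHaar_ball_center, ← measure_ball_half_add_measure_ball_sdiff μ hr, two_mul]
  exact add_le_add_left (addHaar_ball_half_le_addHaar_ball_sdiff μ hr) _

end Geometry

def DyadicallyConstant (w₀ : ℝ → ℝ) (β : ℝ) : Prop :=
  ∀ R : ℝ, 0 < R → ∀ s ∈ Icc R (2 * R), ∀ t ∈ Icc R (2 * R), w₀ s ≤ β * w₀ t

theorem DyadicallyConstant.mem_Icc {w₀ : ℝ → ℝ} {β : ℝ} (h : DyadicallyConstant w₀ β)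
    (hβ : 0 < β) {r s : ℝ} (hr : 0 < r) (hs : s ∈ Icc (r / 2) (2 * r)) :
    w₀ s ∈ Icc (w₀ r / β) (β * w₀ r) := by
  obtain ⟨R, hR, hsR, hrR⟩ : ∃ R, 0 < R ∧ s ∈ Icc R (2 * R) ∧ r ∈ Icc R (2 * R) := by
    rcases le_total s r with hsr | hrs
    · exact ⟨r / 2, by linarith, ⟨hs.1, by linarith⟩, by constructor <;> linarith⟩
    · exact ⟨r, hr, ⟨hrs, hs.2⟩, by constructor <;> linarith⟩
  exact ⟨(div_le_iff₀' hβ).2 (h R hR r hrR s hsR), h R hR s hsR r hrR⟩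

noncomputable def radialMeasure (n : ℕ) (w₀ : ℝ → ℝ) : Measure (EuclideanSpace ℝ (Fin n)) :=
  volume.withDensity fun y => ENNReal.ofReal (w₀ ‖y‖)

section Averages

variable {n : ℕ}

theorem le_centeredMax (ν : Measure (EuclideanSpace ℝ (Fin n)))
    (g : EuclideanSpace ℝ (Fin n) → ℝ) (x : EuclideanSpace ℝ (Fin n)) {r : ℝ} (hr : 0 < r) :
    (ν (ball x r))⁻¹ * ∫⁻ y in ball x r, ‖g y‖₊ ∂ν ≤ centeredMax n ν g x :=
  le_iSup₂_of_le r hr le_rfl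

theorem le_hardyOp (ν : Measure (EuclideanSpace ℝ (Fin n)))
    (g : EuclideanSpace ℝ (Fin n) → ℝ) (x : EuclideanSpace ℝ (Fin n)) {R : ℝ} (hR : ‖x‖ ≤ R) :
    (ν (ball 0 R))⁻¹ * ∫⁻ y in ball 0 R, ‖g y‖₊ ∂ν ≤ hardyOp n ν g x :=
  le_iSup₂_of_le R hR le_rfl

end Averages

section RadialMeasure

variable {n : ℕ} {w₀ : ℝ → ℝ} {β : ℝ}

theorem ofReal_div_mul_volume_le_radialMeasure_ball (hβ : 0 < β)
    (hdyad : DyadicallyConstant w₀ β) {x : EuclideanSpace ℝ (Fin n)} {r : ℝ} (hr : 0 < r)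
    (hrx : r ≤ ‖x‖) :
    ENNReal.ofReal (w₀ ‖x‖ / (2 * β)) * volume (ball x r) ≤ radialMeasure n w₀ (ball x r) := by
  set S := ball x r ∩ {y | ‖x‖ ≤ ‖y‖}
  have hS : MeasurableSet S :=
    measurableSet_ball.inter (measurableSet_le measurable_const measurable_norm)
  have hwS : ∀ y ∈ S, ENNReal.ofReal (w₀ ‖x‖ / β) ≤ ENNReal.ofReal (w₀ ‖y‖) := by
    rintro y ⟨hy, hxy : ‖x‖ ≤ ‖y‖⟩
    have hyx : ‖y - x‖ < r := by simpa [dist_eq_norm] using hy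
    exact ENNReal.ofReal_le_ofReal (hdyad.mem_Icc hβ (hr.trans_le hrx)
      ⟨by linarith [norm_nonneg x], by linarith [norm_le_insert' y x]⟩).1
  calc _ ≤ ENNReal.ofReal (w₀ ‖x‖ / (2 * β)) * (2 * volume S) := by
        gcongr; exact measure_ball_le_two_mul_measure_ball_inter_norm_ge volume x r
    _ = ENNReal.ofReal (w₀ ‖x‖ / β) * volume S := by
        rw [← mul_assoc, show w₀ ‖x‖ / β = w₀ ‖x‖ / (2 * β) * 2 by field_simp,
          ENNReal.ofReal_mul' zero_le_two, ENNReal.ofReal_ofNat]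
    _ ≤ radialMeasure n w₀ S := mul_le_withDensity_apply hS hwS
    _ ≤ radialMeasure n w₀ (ball x r) := measure_mono inter_subset_left

theorem setLIntegral_radialMeasure_le_volume_mul_centeredMax (hwm : Measurable w₀)
    (f : EuclideanSpace ℝ (Fin n) → ℝ) (x : EuclideanSpace ℝ (Fin n)) {r : ℝ} (hr : 0 < r) :
    ∫⁻ y in ball x r, ‖f y‖₊ ∂radialMeasure n w₀
      ≤ volume (ball x r) * centeredMax n volume (fun y => f y * w₀ ‖y‖) x :=
  calc ∫⁻ y in ball x r, ‖f y‖₊ ∂radialMeasure n w₀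
      ≤ ∫⁻ y in ball x r, ENNReal.ofReal (w₀ ‖y‖) * ‖f y‖₊ :=
        setLIntegral_withDensity_le (hwm.comp measurable_norm).ennreal_ofReal
          measurableSet_ball _
    _ ≤ ∫⁻ y in ball x r, ‖f y * w₀ ‖y‖‖₊ := lintegral_mono fun y => by
        rw [nnnorm_mul, ENNReal.coe_mul, mul_comm]
        gcongr
        exact Real.ofReal_le_enorm _
    _ ≤ _ := setLIntegral_le_measure_mul_of_inv_mul_le measure_ball_lt_top.ne
        (le_centeredMax _ _ _ hr)

theorem radialMeasure_average_le_of_le_norm (hw : ∀ r : ℝ, 0 ≤ r → 0 < w₀ r)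
    (hwm : Measurable w₀) (hβ : 1 ≤ β) (hdyad : DyadicallyConstant w₀ β)
    (f : EuclideanSpace ℝ (Fin n) → ℝ) {x : EuclideanSpace ℝ (Fin n)} {r : ℝ} (hr : 0 < r)
    (hrx : r ≤ ‖x‖) :
    (radialMeasure n w₀ (ball x r))⁻¹ * ∫⁻ y in ball x r, ‖f y‖₊ ∂radialMeasure n w₀
      ≤ ENNReal.ofReal (2 * β ^ 4 + 1) *
        ((ENNReal.ofReal (w₀ ‖x‖))⁻¹ * centeredMax n volume (fun y => f y * w₀ ‖y‖) x) := by
  have hβ₀ : 0 < β := by linarith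
  have hwx : 0 < w₀ ‖x‖ := hw _ (norm_nonneg x)
  have hK : ENNReal.ofReal (2 * β) * ENNReal.ofReal (w₀ ‖x‖ / (2 * β))
      * (ENNReal.ofReal (w₀ ‖x‖))⁻¹ = 1 := by
    rw [← ENNReal.ofReal_mul (by positivity), mul_div_cancel₀ _ (by positivity),
      ENNReal.mul_inv_cancel (ENNReal.ofReal_pos.2 hwx).ne' ENNReal.ofReal_ne_top]
  have hb₀ : ENNReal.ofReal (w₀ ‖x‖ / (2 * β)) * volume (ball x r) ≠ 0 :=
    mul_ne_zero (ENNReal.ofReal_pos.2 (by positivity)).ne' (measure_ball_pos volume x hr).ne'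
  calc _ ≤ ENNReal.ofReal (2 * β) *
        ((ENNReal.ofReal (w₀ ‖x‖))⁻¹ * centeredMax n volume (fun y => f y * w₀ ‖y‖) x) :=
        inv_mul_le_of_le_of_le_mul hb₀
          (ENNReal.mul_ne_top ENNReal.ofReal_ne_top measure_ball_lt_top.ne)
          (ofReal_div_mul_volume_le_radialMeasure_ball hβ₀ hdyad hr hrx)
          ((setLIntegral_radialMeasure_le_volume_mul_centeredMax hwm f x hr).trans_eq
            (by rw [← one_mul (_ * _), ← hK]; ring))
    _ ≤ _ := by gcongr; nlinarith [pow_le_pow_right₀ hβ (show 1 ≤ 4 by norm_num)]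

theorem ofReal_mul_volume_annulus_le_radialMeasure_ball (hβ : 0 < β)
    (hdyad : DyadicallyConstant w₀ β) {x : EuclideanSpace ℝ (Fin n)} {r : ℝ} (hr : 0 < r)
    (hxr : ‖x‖ ≤ r) :
    ENNReal.ofReal (w₀ r / β) * volume (ball (0 : EuclideanSpace ℝ (Fin n)) r \ ball 0 (r / 2))
      ≤ radialMeasure n w₀ (ball x r) :=
  calc _ ≤ ENNReal.ofReal (w₀ r / β) * volume (ball x r \ ball 0 (r / 2)) :=
        mul_le_mul_right (addHaar_ball_sdiff_ball_half_le volume x hr.le) _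
    _ ≤ radialMeasure n w₀ (ball x r \ ball 0 (r / 2)) :=
        mul_le_withDensity_apply (measurableSet_ball.diff measurableSet_ball) fun _ hy =>
          ENNReal.ofReal_le_ofReal
            (hdyad.mem_Icc hβ hr (norm_mem_Icc_of_mem_ball_sdiff_ball_half hxr hy)).1
    _ ≤ radialMeasure n w₀ (ball x r) := measure_mono sdiff_subset

theorem radialMeasure_ball_zero_le [NeZero n] (hw : ∀ r : ℝ, 0 ≤ r → 0 < w₀ r) (hβ : 0 < β)
    (hdyad : DyadicallyConstant w₀ β) {r : ℝ} (hr : 0 < r)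
    (hhardy : radialMeasure n w₀ (ball 0 (r / 2)) ≤
      ENNReal.ofReal (2 * β * w₀ (r / 2)) * volume (ball (0 : EuclideanSpace ℝ (Fin n)) (r / 2))) :
    radialMeasure n w₀ (ball 0 r) ≤ ENNReal.ofReal (2 * β ^ 3 + β ^ 2) *
      (ENNReal.ofReal (w₀ r / β) *
        volume (ball (0 : EuclideanSpace ℝ (Fin n)) r \ ball 0 (r / 2))) := by
  set A := ball (0 : EuclideanSpace ℝ (Fin n)) r \ ball 0 (r / 2)
  have hwr : 0 < w₀ r := hw r hr.le
  have hwr₂ : 0 < w₀ (r / 2) := hw _ (by positivity)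
  have hw₂ : w₀ (r / 2) ≤ β * w₀ r := (hdyad.mem_Icc hβ hr ⟨le_rfl, by linarith⟩).2
  have hA : radialMeasure n w₀ A ≤ ENNReal.ofReal (β * w₀ r) * volume A :=
    withDensity_apply_le_mul (measurableSet_ball.diff measurableSet_ball) fun y hy =>
      ENNReal.ofReal_le_ofReal (hdyad.mem_Icc hβ hr
        (norm_mem_Icc_of_mem_ball_sdiff_ball_half (by simpa using hr.le) hy)).2
  calc radialMeasure n w₀ (ball 0 r)
      = radialMeasure n w₀ (ball 0 (r / 2)) + radialMeasure n w₀ A :=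
        (measure_ball_half_add_measure_ball_sdiff _ hr.le).symm
    _ ≤ ENNReal.ofReal (2 * β * w₀ (r / 2)) * volume A + ENNReal.ofReal (β * w₀ r) * volume A :=
        add_le_add (hhardy.trans (mul_le_mul_right
          (addHaar_ball_half_le_addHaar_ball_sdiff volume hr.le) _)) hA
    _ = ENNReal.ofReal (2 * β * w₀ (r / 2) + β * w₀ r) * volume A := by
        rw [← add_mul, ENNReal.ofReal_add (by positivity) (by positivity)]
    _ ≤ ENNReal.ofReal ((2 * β ^ 3 + β ^ 2) * (w₀ r / β)) * volume A := by
        gcongr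
        rw [show (2 * β ^ 3 + β ^ 2) * (w₀ r / β) = 2 * β * (β * w₀ r) + β * w₀ r by
          field_simp]
        gcongr
    _ = _ := by rw [ENNReal.ofReal_mul (by positivity), mul_assoc]

theorem setLIntegral_ball_sdiff_le [NeZero n] (hwm : Measurable w₀) (hβ : 0 < β)
    (hdyad : DyadicallyConstant w₀ β) (f : EuclideanSpace ℝ (Fin n) → ℝ)
    {x : EuclideanSpace ℝ (Fin n)} {r : ℝ} (hr : 0 < r) (hxr : ‖x‖ ≤ r) :
    ∫⁻ y in ball x r \ ball 0 (r / 2), ‖f y‖₊ ∂radialMeasure n w₀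
      ≤ ENNReal.ofReal (2 * β ^ 2) * (ENNReal.ofReal (w₀ r / β) *
        volume (ball (0 : EuclideanSpace ℝ (Fin n)) r \ ball 0 (r / 2)) *
          centeredMax n volume f x) := by
  have hc : ENNReal.ofReal (β * w₀ r) * 2 =
      ENNReal.ofReal (2 * β ^ 2) * ENNReal.ofReal (w₀ r / β) := by
    rw [← ENNReal.ofReal_ofNat 2, ← ENNReal.ofReal_mul' zero_le_two,
      ← ENNReal.ofReal_mul (by positivity)]
    congr 1
    field_simp
  calc ∫⁻ y in ball x r \ ball 0 (r / 2), ‖f y‖₊ ∂radialMeasure n w₀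
      ≤ ENNReal.ofReal (β * w₀ r) * ∫⁻ y in ball x r \ ball 0 (r / 2), ‖f y‖₊ :=
        setLIntegral_withDensity_le_mul (hwm.comp measurable_norm).ennreal_ofReal
          (measurableSet_ball.diff measurableSet_ball) (fun _ hy => ENNReal.ofReal_le_ofReal
            (hdyad.mem_Icc hβ hr (norm_mem_Icc_of_mem_ball_sdiff_ball_half hxr hy)).2)
          ENNReal.ofReal_ne_top _
    _ ≤ ENNReal.ofReal (β * w₀ r) * ∫⁻ y in ball x r, ‖f y‖₊ :=
        mul_le_mul_right (lintegral_mono_set sdiff_subset) _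
    _ ≤ ENNReal.ofReal (β * w₀ r) * (volume (ball x r) * centeredMax n volume f x) :=
        mul_le_mul_right (setLIntegral_le_measure_mul_of_inv_mul_le measure_ball_lt_top.ne
          (le_centeredMax _ _ _ hr)) _
    _ ≤ ENNReal.ofReal (β * w₀ r) * (2 * volume (ball (0 : EuclideanSpace ℝ (Fin n)) r \
          ball 0 (r / 2)) * centeredMax n volume f x) :=
        mul_le_mul_right (mul_le_mul_left
          (addHaar_ball_le_two_mul_addHaar_ball_sdiff volume x hr.le) _) _
    _ = _ := by rw [← mul_assoc, ← mul_assoc, hc]; ring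

theorem setLIntegral_ball_zero_le [NeZero n] (hw : ∀ r : ℝ, 0 ≤ r → 0 < w₀ r) (hβ : 0 < β)
    (hdyad : DyadicallyConstant w₀ β) {r : ℝ} (hr : 0 < r)
    (hhardy : radialMeasure n w₀ (ball 0 (r / 2))
      ≤ ENNReal.ofReal (2 * β * w₀ (r / 2)) * volume (ball (0 : EuclideanSpace ℝ (Fin n)) (r / 2)))
    (f : EuclideanSpace ℝ (Fin n) → ℝ) {x : EuclideanSpace ℝ (Fin n)} (hxr : ‖x‖ ≤ r) :
    ∫⁻ y in ball 0 r, ‖f y‖₊ ∂radialMeasure n w₀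
      ≤ ENNReal.ofReal (2 * β ^ 3 + β ^ 2) * (ENNReal.ofReal (w₀ r / β) *
        volume (ball (0 : EuclideanSpace ℝ (Fin n)) r \ ball 0 (r / 2)) *
          hardyOp n (radialMeasure n w₀) f x) := by
  have hball := radialMeasure_ball_zero_le hw hβ hdyad hr hhardy
  have hfin : radialMeasure n w₀ (ball 0 r) ≠ ∞ := ne_top_of_le_ne_top
    (ENNReal.mul_ne_top ENNReal.ofReal_ne_top (ENNReal.mul_ne_top ENNReal.ofReal_ne_top
      ((measure_mono sdiff_subset).trans_lt measure_ball_lt_top).ne)) hball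
  calc _ ≤ radialMeasure n w₀ (ball 0 r) * hardyOp n (radialMeasure n w₀) f x :=
        setLIntegral_le_measure_mul_of_inv_mul_le hfin (le_hardyOp _ _ _ hxr)
    _ ≤ _ := by rw [← mul_assoc]; exact mul_le_mul_left hball _

theorem radialMeasure_average_le_of_norm_le [NeZero n] (hw : ∀ r : ℝ, 0 ≤ r → 0 < w₀ r)
    (hwm : Measurable w₀) (hβ : 1 ≤ β) (hdyad : DyadicallyConstant w₀ β) {r : ℝ}
    (hhardy : radialMeasure n w₀ (ball 0 (r / 2))
      ≤ ENNReal.ofReal (2 * β * w₀ (r / 2)) * volume (ball (0 : EuclideanSpace ℝ (Fin n)) (r / 2)))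
    (f : EuclideanSpace ℝ (Fin n) → ℝ) {x : EuclideanSpace ℝ (Fin n)} (hr : 0 < r)
    (hxr : ‖x‖ ≤ r) :
    (radialMeasure n w₀ (ball x r))⁻¹ * ∫⁻ y in ball x r, ‖f y‖₊ ∂radialMeasure n w₀
      ≤ ENNReal.ofReal (2 * β ^ 4 + 1) *
        (centeredMax n volume f x + hardyOp n (radialMeasure n w₀) f x) := by
  have hβ₀ : 0 < β := by linarith
  have hV := addHaar_ball_le_two_mul_addHaar_ball_sdiff volume x hr.le
  set A := ball (0 : EuclideanSpace ℝ (Fin n)) r \ ball 0 (r / 2)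
  set b := ENNReal.ofReal (w₀ r / β) * volume A
  have hA₀ : volume A ≠ 0 := fun h => (measure_ball_pos volume x hr).ne' (by simpa [h] using hV)
  have hb₀ : b ≠ 0 := mul_ne_zero (ENNReal.ofReal_pos.2 (div_pos (hw r hr.le) hβ₀)).ne' hA₀
  have hb : b ≠ ∞ := ENNReal.mul_ne_top ENNReal.ofReal_ne_top
    ((measure_mono sdiff_subset).trans_lt measure_ball_lt_top).ne
  have hsplit : ball x r ⊆ (ball x r \ ball 0 (r / 2)) ∪ ball 0 r :=
    (subset_sdiff_union _ _).trans (union_subset_union_right _ (ball_subset_ball (by linarith)))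
  refine inv_mul_le_of_le_of_le_mul hb₀ hb
    (ofReal_mul_volume_annulus_le_radialMeasure_ball hβ₀ hdyad hr hxr) ?_
  calc ∫⁻ y in ball x r, ‖f y‖₊ ∂radialMeasure n w₀
      ≤ ENNReal.ofReal (2 * β ^ 2) * (b * centeredMax n volume f x)
        + ENNReal.ofReal (2 * β ^ 3 + β ^ 2) * (b * hardyOp n (radialMeasure n w₀) f x) :=
        (lintegral_mono_set hsplit).trans ((lintegral_union_le _ _ _).trans
          (add_le_add (setLIntegral_ball_sdiff_le hwm hβ₀ hdyad f hr hxr)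
            (setLIntegral_ball_zero_le hw hβ₀ hdyad hr hhardy f hxr)))
    _ ≤ ENNReal.ofReal (2 * β ^ 4 + 1) * (b * centeredMax n volume f x)
        + ENNReal.ofReal (2 * β ^ 4 + 1) * (b * hardyOp n (radialMeasure n w₀) f x) := by
        have h₁ : 2 * β ^ 2 ≤ 2 * β ^ 4 + 1 := by nlinarith [sq_nonneg (β ^ 2 - 1)]
        have h₂ : 2 * β ^ 3 + β ^ 2 ≤ 2 * β ^ 4 + 1 := by
          have h₃ : β ≤ β ^ 3 := by simpa using pow_le_pow_right₀ hβ (by norm_num : 1 ≤ 3)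
          nlinarith [mul_le_mul_of_nonneg_left h₃ (by linarith : 0 ≤ β - 1)]
        exact add_le_add (mul_le_mul_left (ENNReal.ofReal_le_ofReal h₁) _)
          (mul_le_mul_left (ENNReal.ofReal_le_ofReal h₂) _)
    _ = _ := by ring

end RadialMeasure

/-- Pointwise bound: if `w(x) = w₀(|x|)` is essentially constant over dyadic annuli with
constant `β` and the dimension is large enough that `μ(B_R) ≤ 2β w₀(R)|B_R|`, then
`M_μ f ≤ C (M f + w⁻¹ M(fw) + H_μ f)` with `C = 2β⁴ + 1` depending only on `β`. -/
theorem stmt_11 (n : ℕ) (w₀ : ℝ → ℝ) (hw : ∀ r : ℝ, 0 ≤ r → 0 < w₀ r)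
    (hwc : Continuous w₀) (β : ℝ) (hβ : 1 ≤ β)
    (hdyad : ∀ R : ℝ, 0 < R → ∀ s ∈ Set.Icc R (2 * R), ∀ t ∈ Set.Icc R (2 * R),
      w₀ s ≤ β * w₀ t)
    (μ : Measure (EuclideanSpace ℝ (Fin n)))
    (hμ : μ = volume.withDensity fun x => ENNReal.ofReal (w₀ ‖x‖))
    (hhardy : ∀ R : ℝ, 0 < R →
      μ (ball (0 : EuclideanSpace ℝ (Fin n)) R)
        ≤ ENNReal.ofReal (2 * β * w₀ R) * volume (ball (0 : EuclideanSpace ℝ (Fin n)) R))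
    (f : EuclideanSpace ℝ (Fin n) → ℝ) (x : EuclideanSpace ℝ (Fin n)) :
    centeredMax n μ f x
      ≤ ENNReal.ofReal (2 * β ^ 4 + 1) *
        (centeredMax n volume f x
          + (ENNReal.ofReal (w₀ ‖x‖))⁻¹ *
              centeredMax n volume (fun y => f y * w₀ ‖y‖) x
          + hardyOp n μ f x) := by
  obtain rfl : μ = radialMeasure n w₀ := hμ
  refine iSup₂_le fun r hr => ?_
  rcases Nat.eq_zero_or_pos n with rfl | hn
  · obtain rfl : x = 0 := Subsingleton.elim x 0
    calc _ ≤ hardyOp 0 (radialMeasure 0 w₀) f 0 := le_hardyOp _ f 0 (by simpa using hr.le)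
      _ ≤ _ := le_mul_of_one_le_of_le
          (ENNReal.one_le_ofReal.2 (le_add_of_nonneg_left (by positivity))) le_add_self
  have : NeZero n := ⟨hn.ne'⟩
  rcases le_or_gt r ‖x‖ with hrx | hxr
  · calc _ ≤ _ := radialMeasure_average_le_of_le_norm hw hwc.measurable hβ hdyad f hr hrx
      _ ≤ _ := by gcongr; exact le_add_self.trans le_self_add
  · calc _ ≤ _ := radialMeasure_average_le_of_norm_le hw hwc.measurable hβ hdyad
          (hhardy _ (half_pos hr)) f hr hxr.le
      _ ≤ _ := by gcongr; exact le_self_add
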